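/- Let q = 2^r and for β ∈ F_q let N_{DC⁻(n,q)}(β) = |{w ∈ DC⁻(n,q) : Tr w = β}|. Then: (a) for every odd n ≥ 3 and every q, N_{DC⁻(n,q)}(β) > 0 for all β ∈ F_q; (b) for n = 1 and every q, N_{DC⁻(1,q)}(β) = q if β = 0, N_{DC⁻(1,q)}(β) = 2q if β ≠ 0 and tr(β^{−1}) = 0, and N_{DC⁻(1,q)}(β) = 0 if β ≠ 0 and tr(β^{−1}) = 1. -/

import Mathlib

open scoped Classical
open Finset Matrix

noncomputable section

/-- The trace map `tr : F_q → F_2`, viewed inside `F`: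
`tr(x) = x + x² + ⋯ + x^(2^(r−1))`. -/
def trF (F : Type*) [Field F] (r : ℕ) (x : F) : F :=
  ∑ i ∈ Finset.range r, x ^ (2 ^ i)

/-- The canonical additive character `λ(x) = (−1)^(tr x)`, valued in `ℚ`. -/
def lam (F : Type*) [Field F] (r : ℕ) (x : F) : ℚ :=
  if trF F r x = 0 then 1 else -1

/-- The Kloosterman sum `K(λ;a)`. -/
def Kl (F : Type*) [Field F] [Fintype F] (r : ℕ) (a : F) : ℚ :=
  ∑ α : Fˣ, lam F r ((α : F) + a * ((α : F))⁻¹)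

/-- The 2-dimensional Kloosterman sum `K₂(λ;a)`. -/
def Kl2 (F : Type*) [Field F] [Fintype F] (r : ℕ) (a : F) : ℚ :=
  ∑ α : Fˣ, ∑ β : Fˣ, lam F r ((α : F) + (β : F) + a * ((α : F))⁻¹ * ((β : F))⁻¹)

/-- The m-dimensional Kloosterman sum `K_m(λ;a)`; `K₀(λ;a) = λ(a)`. -/
def Klm (F : Type*) [Field F] [Fintype F] (r m : ℕ) (a : F) : ℚ :=
  ∑ α : Fin m → Fˣ, lam F r ((∑ i, ((α i : F))) + a * ∏ i, ((α i : F))⁻¹)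

/-- Power moments of Kloosterman sums, `MK^h`. -/
def MK (F : Type*) [Field F] [Fintype F] (r h : ℕ) : ℚ :=
  ∑ a : Fˣ, (Kl F r (a : F)) ^ h

/-- Power moments of 2-dimensional Kloosterman sums, `MK₂^h`. -/
def MK2 (F : Type*) [Field F] [Fintype F] (r h : ℕ) : ℚ :=
  ∑ a : Fˣ, (Kl2 F r (a : F)) ^ h

/-- Stirling numbers of the second kind. -/
def stirl (h t : ℕ) : ℚ :=
  (1 / (t.factorial : ℚ)) *
    ∑ j ∈ Finset.range (t + 1), (-1 : ℚ) ^ (t - j) * (t.choose j : ℚ) * (j : ℚ) ^ h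

/-- Binomial coefficient `binom(b,a)` with the convention that it is `0`
when `a < 0` or `a > b`. -/
def binomQ (b a : ℤ) : ℚ :=
  if 0 ≤ a ∧ a ≤ b then (b.toNat.choose a.toNat : ℚ) else 0

/-- The q-binomial coefficient `[n,r]_q`. -/
def qbinom (q n r : ℕ) : ℚ :=
  ∏ j ∈ Finset.range r, ((q : ℚ) ^ (n - j) - 1) / ((q : ℚ) ^ (r - j) - 1)

/-- `A⁻(n,q)`. -/
def Aneg (q n : ℕ) : ℚ :=
  (q : ℚ) ^ ((5 * n ^ 2 - 1) / 4) * qbinom q n 1 *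
    ∏ j ∈ Finset.range ((n - 1) / 2), ((q : ℚ) ^ (2 * (j + 1) - 1) - 1)

/-- `B⁻(n,q)`. -/
def Bneg (q n : ℕ) : ℚ :=
  (q : ℚ) ^ ((n - 1) ^ 2 / 4) * ((q : ℚ) ^ n - 1) *
    ∏ j ∈ Finset.range ((n - 1) / 2), ((q : ℚ) ^ (2 * (j + 1)) - 1)

/-- `A⁺(n,q)`. -/
def Apos (q n : ℕ) : ℚ :=
  (q : ℚ) ^ ((5 * n ^ 2 - 2 * n) / 4) * qbinom q n 2 *
    ∏ j ∈ Finset.range ((n - 2) / 2), ((q : ℚ) ^ (2 * (j + 1) - 1) - 1)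

/-- `B⁺(n,q)`. -/
def Bpos (q n : ℕ) : ℚ :=
  (q : ℚ) ^ ((n - 2) ^ 2 / 4) * ((q : ℚ) ^ n - 1) * ((q : ℚ) ^ (n - 1) - 1) *
    ∏ j ∈ Finset.range ((n - 2) / 2), ((q : ℚ) ^ (2 * (j + 1)) - 1)

/-- The type of `2n × 2n` matrices over `F`. -/
abbrev Mat (F : Type*) (n : ℕ) := Matrix (Fin n ⊕ Fin n) (Fin n ⊕ Fin n) F

/-- The maximal parabolic subgroup `P(2n,q)` of `Sp(2n,q)`, as a set of matrices. -/
def Pmat (F : Type*) [Field F] (n : ℕ) : Set (Mat F n) :=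
  {w | ∃ A B : Matrix (Fin n) (Fin n) F, IsUnit A ∧ Bᵀ = B ∧
        w = Matrix.fromBlocks A 0 0 (A⁻¹)ᵀ * Matrix.fromBlocks 1 B 0 1}

/-- The element `σ_r ∈ Sp(2n,q)`. -/
def sigmaMat (F : Type*) [Field F] (n r : ℕ) : Mat F n :=
  Matrix.fromBlocks
    (Matrix.of fun i j : Fin n => if i = j ∧ r ≤ (i : ℕ) then 1 else 0)
    (Matrix.of fun i j : Fin n => if i = j ∧ (i : ℕ) < r then 1 else 0)
    (Matrix.of fun i j : Fin n => if i = j ∧ (i : ℕ) < r then 1 else 0)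
    (Matrix.of fun i j : Fin n => if i = j ∧ r ≤ (i : ℕ) then 1 else 0)

/-- The double coset `P σ_r P` in `Sp(2n,q)`. -/
def DCoset (F : Type*) [Field F] (n r : ℕ) : Set (Mat F n) :=
  {w | ∃ p ∈ Pmat F n, ∃ p' ∈ Pmat F n, w = p * sigmaMat F n r * p'}

/-- `DC⁻(n,q) = P σ_(n−1) P`. -/
def DCneg (F : Type*) [Field F] (n : ℕ) : Set (Mat F n) := DCoset F n (n - 1)

/-- `DC⁺(n,q) = P σ_(n−2) P`. -/
def DCpos (F : Type*) [Field F] (n : ℕ) : Set (Mat F n) := DCoset F n (n - 2)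

/-- `N_S(β) = |{w ∈ S : Tr w = β}|`. -/
def NDC (F : Type*) [Field F] [Fintype F] (n : ℕ) (S : Set (Mat F n)) (β : F) : ℕ :=
  (Finset.univ.filter fun w => w ∈ S ∧ Matrix.trace w = β).card

/-- Hamming weight of a binary word. -/
def wordWeight {α : Type*} [Fintype α] (u : α → ZMod 2) : ℕ :=
  (Finset.univ.filter fun x => u x = 1).card

/-- The number of codewords of Hamming weight `j` in the binary code `C(S)`
consisting of all `u ∈ F_2^S` with `∑_{w ∈ S} u(w)·Tr(w) = 0` in `F`. -/
def weightCount (F : Type*) [Field F] [Fintype F] (n : ℕ) (S : Set (Mat F n)) (j : ℕ) : ℕ :=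
  Nat.card {u : S → ZMod 2 //
    (∑ w : S, if u w = 1 then Matrix.trace (w : Mat F n) else 0) = 0 ∧ wordWeight u = j}

/-- The Kloosterman sum `K(ψ;a)` for a general (complex-valued) additive character. -/
def KlC (F : Type*) [Field F] [Fintype F] (ψ : AddChar F ℂ) (a : F) : ℂ :=
  ∑ α : Fˣ, ψ ((α : F) + a * ((α : F))⁻¹)

/-- The Kloosterman sum `K_{GL(t,q)}(ψ;a)` for the general linear group. -/
def KGL (F : Type*) [Field F] [Fintype F] (ψ : AddChar F ℂ) (t : ℕ) (a : F) : ℂ :=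
  ∑ w : Matrix.GeneralLinearGroup (Fin t) F,
    ψ (Matrix.trace (w : Matrix (Fin t) (Fin t) F) +
       a * Matrix.trace ((↑(w⁻¹) : Matrix (Fin t) (Fin t) F)))

/-- The exponential sum `∑_{w ∈ S} ψ(Tr w)` over a set of matrices. -/
def expSum (F : Type*) [Field F] [Fintype F] (n : ℕ) (S : Set (Mat F n))
    (ψ : AddChar F ℂ) : ℂ :=
  ∑ w ∈ Finset.univ.filter (fun w => w ∈ S), ψ (Matrix.trace w)

/-- The exponential sum `∑_{w ∈ S} λ(a·Tr w)` over a set of matrices. -/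
def expSumQ (F : Type*) [Field F] [Fintype F] (r n : ℕ) (S : Set (Mat F n)) (a : F) : ℚ :=
  ∑ w ∈ Finset.univ.filter (fun w => w ∈ S), lam F r (a * Matrix.trace w)

/-- `tr` as a map to `ZMod 2`. -/
def trZ (F : Type*) [Field F] (r : ℕ) (x : F) : ZMod 2 :=
  if trF F r x = 0 then 0 else 1

/-! For `n ≥ 3` a matrix of any trace `β` in `P σ_{n-1} P` is `[[1, c E₀₀], [0, 1]] σ_{n-1}`, whose
trace is `Tr σ_{n-1} + c`. For `n = 1` we have `σ₀ = 1`, so `DC⁻(1,q) = P(2,q)` is the group of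
matrices `[[a, b], [0, a⁻¹]]`; those of trace `β` correspond to a root `a` of `a² + βa + 1` together
with an arbitrary `b`. For `β ≠ 0` the substitution `a = βt` turns the quadratic into
`t² + t = β⁻²`, which has two solutions if `tr(β⁻¹) = 0` and none otherwise (additive Hilbert 90). -/

section TraceCharTwo

variable {F : Type*} [Field F] {r : ℕ}

theorem trF_add [CharP F 2] (x y : F) : trF F r (x + y) = trF F r x + trF F r y := by
  simp only [trF, ← Finset.sum_add_distrib, add_pow_char_pow]

theorem sq_add_self_eq_sq_add_self_iff [CharP F 2] {s t : F} :
    t ^ 2 + t = s ^ 2 + s ↔ t = s ∨ t = s + 1 := by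
  have htwo : (2 : F) = 0 := CharTwo.two_eq_zero
  constructor
  · intro h
    have hfac : (t + s) * (t + s + 1) = 0 := by
      linear_combination h + (t * s + s ^ 2 + s) * htwo
    rcases mul_eq_zero.1 hfac with h₁ | h₁
    · left; linear_combination h₁ - s * htwo
    · right; linear_combination h₁ - (s + 1) * htwo
  · rintro (rfl | rfl)
    · rfl
    · linear_combination (s + 1) * htwo

variable [Fintype F]

theorem card_filter_sq_add_self_eq_sq_add_self [CharP F 2] (s : F) :
    #{t : F | t ^ 2 + t = s ^ 2 + s} = 2 := by
  have hset : ({t : F | t ^ 2 + t = s ^ 2 + s} : Finset F) = {s, s + 1} := by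
    ext t
    simp [sq_add_self_eq_sq_add_self_iff]
  rw [hset, Finset.card_pair fun h => by simp at h]

theorem trF_sq (hF : Fintype.card F = 2 ^ r) (x : F) : trF F r (x ^ 2) = trF F r x := by
  have hfrob : x ^ 2 ^ r = x := by rw [← hF, FiniteField.pow_card]
  have key : trF F r (x ^ 2) + x ^ 2 ^ 0 = trF F r x + x ^ 2 ^ r := by
    simp only [trF, ← pow_mul, ← pow_succ']
    rw [← Finset.sum_range_succ' (fun i => x ^ 2 ^ i), Finset.sum_range_succ]
  rwa [pow_zero, pow_one, hfrob, add_left_inj] at key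

theorem trF_sq_add_self [CharP F 2] (hF : Fintype.card F = 2 ^ r) (t : F) :
    trF F r (t ^ 2 + t) = 0 := by
  rw [trF_add, trF_sq hF, CharTwo.add_self_eq_zero]

theorem card_filter_trF_eq_zero_le (hr : 0 < r) : #{x : F | trF F r x = 0} ≤ 2 ^ (r - 1) := by
  open Polynomial in
  set P : F[X] := ∑ i ∈ Finset.range r, X ^ 2 ^ i
  have hcoeff : P.coeff (2 ^ (r - 1)) = 1 := by
    rw [finsetSum_coeff, Finset.sum_eq_single (r - 1)]
    · simp
    · intro i _ hi
      rw [coeff_X_pow, if_neg fun h => hi (Nat.pow_right_injective le_rfl h).symm]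
    · simp [hr]
  have hP : P ≠ 0 := fun h => by simp [h] at hcoeff
  have hdeg : P.natDegree ≤ 2 ^ (r - 1) :=
    natDegree_sum_le_of_forall_le _ _ fun i hi => by
      rw [natDegree_X_pow]
      exact Nat.pow_le_pow_right two_pos (by have := Finset.mem_range.1 hi; omega)
  calc #{x : F | trF F r x = 0} ≤ P.roots.toFinset.card :=
        Finset.card_le_card fun x hx => by
          rw [Multiset.mem_toFinset, mem_roots hP]
          simpa [P, eval_finsetSum, trF] using (Finset.mem_filter.1 hx).2
    _ ≤ P.natDegree := (Multiset.toFinset_card_le _).trans (card_roots' P)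
    _ ≤ 2 ^ (r - 1) := hdeg

theorem card_eq_two_mul_card_image_sq_add_self [CharP F 2] :
    Fintype.card F = 2 * #(Finset.univ.image fun t : F => t ^ 2 + t) := by
  rw [← Finset.card_univ, Finset.card_eq_sum_card_image (fun t : F => t ^ 2 + t),
    Finset.sum_congr rfl fun b hb => ?_, Finset.sum_const, smul_eq_mul, mul_comm]
  obtain ⟨s, -, rfl⟩ := Finset.mem_image.1 hb
  simpa using card_filter_sq_add_self_eq_sq_add_self s

-- The image of `t ↦ t² + t` has `2^(r-1)` elements and lies in the kernel of the trace, which is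
-- the zero set of a polynomial of degree `2^(r-1)`.
theorem exists_sq_add_self_eq_iff [CharP F 2] (hF : Fintype.card F = 2 ^ r) (c : F) :
    (∃ t, t ^ 2 + t = c) ↔ trF F r c = 0 := by
  refine ⟨fun ⟨t, ht⟩ => ht ▸ trF_sq_add_self hF t, fun hc => ?_⟩
  set I := Finset.univ.image fun t : F => t ^ 2 + t
  set K : Finset F := {x | trF F r x = 0}
  have hr : 0 < r := Nat.pos_of_ne_zero fun h => by
    simpa [hF, h] using Fintype.one_lt_card (α := F)
  have hsub : I ⊆ K := by
    intro x hx
    obtain ⟨t, -, rfl⟩ := Finset.mem_image.1 hx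
    simpa [K] using trF_sq_add_self hF t
  have hle : 2 * #K ≤ 2 * #I := by
    rw [← card_eq_two_mul_card_image_sq_add_self, hF]
    calc 2 * #K ≤ 2 * 2 ^ (r - 1) := Nat.mul_le_mul_left 2 (card_filter_trF_eq_zero_le hr)
      _ = 2 ^ r := by rw [← pow_succ', Nat.sub_add_cancel hr]
  have hcI : c ∈ I := by
    rw [Finset.eq_of_subset_of_card_le hsub (Nat.le_of_mul_le_mul_left hle two_pos)]
    simpa [K] using hc
  simpa [I] using hcI

theorem card_filter_sq_add_self_eq [CharP F 2] (hF : Fintype.card F = 2 ^ r) (c : F) :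
    #{t : F | t ^ 2 + t = c} = if trF F r c = 0 then 2 else 0 := by
  split_ifs with hc
  · obtain ⟨s, rfl⟩ := (exists_sq_add_self_eq_iff hF c).2 hc
    exact card_filter_sq_add_self_eq_sq_add_self s
  · rw [Finset.card_eq_zero, Finset.filter_eq_empty_iff]
    exact fun t _ ht => hc ((exists_sq_add_self_eq_iff hF c).1 ⟨t, ht⟩)

theorem card_filter_mul_self_add_mul_add_one_eq [CharP F 2] (hF : Fintype.card F = 2 ^ r)
    (β : F) : #{a : F | a * a + β * a + 1 = 0} =
      if β = 0 then 1 else if trF F r β⁻¹ = 0 then 2 else 0 := by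
  have htwo : (2 : F) = 0 := CharTwo.two_eq_zero
  by_cases hβ : β = 0
  · rw [if_pos hβ]
    subst hβ
    rw [Finset.card_eq_one]
    refine ⟨1, Finset.eq_singleton_iff_unique_mem.2 ⟨by simp [one_add_one_eq_two, htwo], ?_⟩⟩
    intro a ha
    have hsq : (a + 1) * (a + 1) = 0 := by
      linear_combination (Finset.mem_filter.1 ha).2 + a * htwo
    linear_combination mul_self_eq_zero.1 hsq - htwo
  have hβi : β * β⁻¹ = 1 := mul_inv_cancel₀ hβ
  rw [if_neg hβ, ← trF_sq hF, ← card_filter_sq_add_self_eq hF]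
  refine Finset.card_nbij' (β⁻¹ * ·) (β * ·) (fun a ha => ?_) (fun t ht => ?_)
    (fun a _ => by simp [← mul_assoc, hβi]) (fun t _ => by simp [hβ])
  · simp only [Finset.coe_filter, Finset.mem_univ, true_and, Set.mem_ofPred_eq] at ha ⊢
    linear_combination β⁻¹ ^ 2 * ha - β⁻¹ * a * hβi - β⁻¹ ^ 2 * htwo
  · simp only [Finset.coe_filter, Finset.mem_univ, true_and, Set.mem_ofPred_eq] at ht ⊢
    linear_combination β ^ 2 * ht + (β * β⁻¹ + 1) * hβi + htwo

end TraceCharTwo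

section Parabolic

variable {F : Type*} [Field F] {n : ℕ}

theorem fromBlocks_mul_fromBlocks_one (A B : Matrix (Fin n) (Fin n) F) :
    fromBlocks A 0 0 (A⁻¹)ᵀ * fromBlocks 1 B 0 1 = fromBlocks A (A * B) 0 (A⁻¹)ᵀ := by
  simp [fromBlocks_multiply]

theorem one_mem_Pmat : (1 : Mat F n) ∈ Pmat F n :=
  ⟨1, 0, isUnit_one, transpose_zero, by simp⟩

theorem mul_mem_Pmat {p p' : Mat F n} (hp : p ∈ Pmat F n) (hp' : p' ∈ Pmat F n) :
    p * p' ∈ Pmat F n := by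
  obtain ⟨A, B, hA, hB, rfl⟩ := hp
  obtain ⟨A', B', hA', hB', rfl⟩ := hp'
  have hA'inv : A' * A'⁻¹ = 1 := mul_nonsing_inv A' ((isUnit_iff_isUnit_det A').1 hA')
  refine ⟨A * A', B' + A'⁻¹ * B * (A'⁻¹)ᵀ, hA.mul hA', ?_, ?_⟩
  · simp [transpose_mul, hB, hB', Matrix.mul_assoc]
  · rw [fromBlocks_mul_fromBlocks_one, fromBlocks_mul_fromBlocks_one,
      fromBlocks_mul_fromBlocks_one, fromBlocks_multiply, Matrix.mul_inv_rev, transpose_mul]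
    congr 1 <;> simp [Matrix.mul_add, Matrix.mul_assoc, ← Matrix.mul_assoc A' A'⁻¹, hA'inv]

theorem sigmaMat_zero : sigmaMat F n 0 = 1 := by
  ext (i | i) (j | j) <;> simp [sigmaMat, one_apply]

theorem DCoset_zero : DCoset F n 0 = Pmat F n := by
  ext w
  refine ⟨?_, fun hw => ⟨w, hw, 1, one_mem_Pmat, by simp [sigmaMat_zero]⟩⟩
  rintro ⟨p, hp, p', hp', rfl⟩
  simpa [sigmaMat_zero] using mul_mem_Pmat hp hp'

theorem Matrix.trace_fromBlocks {l m R : Type*} [Fintype l] [Fintype m] [AddCommMonoid R]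
    (A : Matrix l l R) (B : Matrix l m R) (C : Matrix m l R) (D : Matrix m m R) :
    (fromBlocks A B C D).trace = A.trace + D.trace := by
  simp [trace, Fintype.sum_sum_type]

theorem trace_fromBlocks_one_single_mul_sigmaMat {r : ℕ} (i : Fin n) (hi : (i : ℕ) < r) (c : F) :
    (fromBlocks 1 (single i i c) 0 1 * sigmaMat F n r).trace = (sigmaMat F n r).trace + c := by
  simp only [sigmaMat, fromBlocks_multiply, trace_fromBlocks, trace_add, trace_single_mul]
  simp [hi]
  ring

theorem exists_mem_DCoset_trace_eq {r : ℕ} (hr : 0 < r) (hrn : r ≤ n) (β : F) :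
    ∃ w ∈ DCoset F n r, w.trace = β := by
  set i : Fin n := ⟨0, by omega⟩
  set c := β - (sigmaMat F n r).trace
  refine ⟨fromBlocks 1 (single i i c) 0 1 * sigmaMat F n r, ⟨_, ⟨1, single i i c, isUnit_one,
    transpose_single _ _ _, by simp⟩, 1, one_mem_Pmat, (mul_one _).symm⟩, ?_⟩
  rw [trace_fromBlocks_one_single_mul_sigmaMat i hr]
  ring

theorem mem_Pmat_one_iff (w : Mat F 1) : w ∈ Pmat F 1 ↔
    w (.inr 0) (.inl 0) = 0 ∧ w (.inl 0) (.inl 0) * w (.inr 0) (.inr 0) = 1 := by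
  constructor
  · rintro ⟨A, B, hA, -, rfl⟩
    have hA0 : A 0 0 ≠ 0 := by simpa [isUnit_iff_isUnit_det, det_unique] using hA
    rw [fromBlocks_mul_fromBlocks_one]
    simp [hA0]
  · rintro ⟨h₂₁, hdet⟩
    have ha : w (.inl 0) (.inl 0) ≠ 0 := left_ne_zero_of_mul_eq_one hdet
    refine ⟨of fun _ _ => w (.inl 0) (.inl 0),
      of fun _ _ => (w (.inl 0) (.inl 0))⁻¹ * w (.inl 0) (.inr 0), ?_, rfl, ?_⟩
    · simpa [isUnit_iff_isUnit_det, det_unique] using ha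
    · rw [fromBlocks_mul_fromBlocks_one]
      ext (i | i) (j | j) <;> fin_cases i <;> fin_cases j
      · rfl
      · simp [mul_apply, ha]
      · exact h₂₁
      · simpa using eq_inv_of_mul_eq_one_right hdet

theorem trace_mat_one (w : Mat F 1) :
    w.trace = w (.inl 0) (.inl 0) + w (.inr 0) (.inr 0) := by
  simp [trace, Fintype.sum_sum_type]

theorem NDC_DCneg_one [Fintype F] [CharP F 2] (β : F) :
    NDC F 1 (DCneg F 1) β = #{a : F | a * a + β * a + 1 = 0} * Fintype.card F := by
  have htwo : (2 : F) = 0 := CharTwo.two_eq_zero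
  have hDC : DCneg F 1 = Pmat F 1 := DCoset_zero
  rw [NDC, hDC, ← Finset.card_univ, ← Finset.card_product]
  refine Finset.card_nbij' (fun w => (w (.inl 0) (.inl 0), w (.inl 0) (.inr 0)))
    (fun p => fromBlocks (of fun _ _ => p.1) (of fun _ _ => p.2) 0 (of fun _ _ => p.1⁻¹))
    (fun w hw => ?_) (fun p hp => ?_) (fun w hw => ?_) (fun p _ => rfl)
  · simp only [Finset.coe_filter, Finset.mem_univ, true_and, Set.mem_ofPred_eq,
      mem_Pmat_one_iff, trace_mat_one] at hw
    obtain ⟨⟨-, hdet⟩, htr⟩ := hw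
    simp only [Finset.coe_product, Finset.coe_filter, Finset.mem_univ, true_and, Set.mem_prod,
      Set.mem_ofPred_eq, Finset.coe_univ, Set.mem_univ, and_true]
    linear_combination w (.inl 0) (.inl 0) * htr - hdet + β * w (.inl 0) (.inl 0) * htwo
  · simp only [Finset.coe_product, Finset.coe_filter, Finset.mem_univ, true_and, Set.mem_prod,
      Set.mem_ofPred_eq, Finset.coe_univ, Set.mem_univ, and_true] at hp
    have ha : p.1 ≠ 0 := fun h => by simp [h] at hp
    simp only [Finset.coe_filter, Finset.mem_univ, true_and, Set.mem_ofPred_eq,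
      mem_Pmat_one_iff, trace_mat_one]
    refine ⟨⟨rfl, mul_inv_cancel₀ ha⟩, ?_⟩
    simp only [fromBlocks_apply₁₁, fromBlocks_apply₂₂, of_apply]
    field_simp
    linear_combination hp - p.1 * β * htwo
  · simp only [Finset.coe_filter, Finset.mem_univ, true_and, Set.mem_ofPred_eq,
      mem_Pmat_one_iff] at hw
    obtain ⟨⟨h₂₁, hdet⟩, -⟩ := hw
    ext (i | i) (j | j) <;> fin_cases i <;> fin_cases j
    · rfl
    · rfl
    · exact h₂₁.symm
    · exact (eq_inv_of_mul_eq_one_right hdet).symm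

end Parabolic

theorem NDC_neg_positivity_general
    (F : Type*) [Field F] [Fintype F] (r q : ℕ) (hq : q = 2 ^ r)
    (hF : Fintype.card F = q) :
    (∀ n : ℕ, Odd n → 3 ≤ n → ∀ β : F, 0 < NDC F n (DCneg F n) β) ∧
    (∀ β : F, NDC F 1 (DCneg F 1) β =
      if β = 0 then q else if trF F r β⁻¹ = 0 then 2 * q else 0) := by
  subst hq
  have : CharP F 2 := charP_of_card_eq_prime_pow hF
  refine ⟨fun n _ hn β => ?_, fun β => ?_⟩
  · obtain ⟨w, hw, htr⟩ :=
      exists_mem_DCoset_trace_eq (F := F) (n := n) (r := n - 1) (by omega) (by omega) β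
    exact Finset.card_pos.2 ⟨w, Finset.mem_filter.2 ⟨Finset.mem_univ w, hw, htr⟩⟩
  · rw [NDC_DCneg_one, card_filter_mul_self_add_mul_add_one_eq hF, hF]
    split_ifs <;> ring

/-- Corollary 10(a): positivity of `N_{DC⁻(n,q)}(β)` for odd
`n ≥ 3`, and its exact values for `n = 1`. -/
theorem NDC_neg_positivity
    (F : Type*) [Field F] [Fintype F] (r q : ℕ) (hr : 0 < r) (hq : q = 2 ^ r)
    (hF : Fintype.card F = q) :
    (∀ n : ℕ, Odd n → 3 ≤ n → ∀ β : F, 0 < NDC F n (DCneg F n) β) ∧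
    (∀ β : F, NDC F 1 (DCneg F 1) β =
      if β = 0 then q else if trF F r β⁻¹ = 0 then 2 * q else 0) :=
  NDC_neg_positivity_general F r q hq hF
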